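/- Let y* ∈ S_d, let x_1, …, x_5 ∈ S_d, and for each i let I_i ⊆ [d] be an unaligned-symbol set for x_i with respect to y*. Let a, b ∈ [d] be distinct symbols such that a ∈ I_i for at most one index i ∈ {1,…,5} and b ∈ I_i for at most one index i ∈ {1,…,5}. Then: a appears before b in at least three of the permutations x_1, …, x_5 if and only if a appears before b in y*. -/

import Mathlib

/-- The sequence representation of a permutation of `[d]`:
the symbol at position `i` is `x i`. -/
def permList {d : ℕ} (x : Equiv.Perm (Fin d)) : List (Fin d) :=
  (List.finRange d).map x

/-- `I` is an unaligned-symbol set for `x` w.r.t. `y`: deleting the symbols of `I`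
from `x` yields a common subsequence of `x` and `y`. -/
def IsUnalignedSet {d : ℕ} (x y : Equiv.Perm (Fin d)) (I : Finset (Fin d)) : Prop :=
  ((permList x).filter (fun a => decide (a ∉ I))).Sublist (permList y)

/-- The symbol `a` appears before the symbol `b` in the permutation `x`. -/
def appearsBefore {d : ℕ} (x : Equiv.Perm (Fin d)) (a b : Fin d) : Prop :=
  x.symm a < x.symm b

instance {d : ℕ} (x : Equiv.Perm (Fin d)) (a b : Fin d) :
    Decidable (appearsBefore x a b) := by
  unfold appearsBefore; infer_instance

lemma permList_idxOf {d : ℕ} (x : Equiv.Perm (Fin d)) (a : Fin d) :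
    (permList x).idxOf a = (x.symm a : ℕ) := by
  have : permList x = (List.finRange d).map x := rfl
  rw [this]
  have := List.idxOf_finRange (x.symm a)
  -- idxOf (x i) (map x l) = idxOf i l for injective x
  have key : ∀ (l : List (Fin d)) (i : Fin d), (l.map x).idxOf (x i) = l.idxOf i := by
    intro l i
    induction l with
    | nil => rfl
    | cons c t ih =>
        by_cases h : c = i
        · subst h; simp
        · have hx : x c ≠ x i := fun hc => h (x.injective hc)
          simp [List.idxOf_cons, hx, h, ih]
  have := key (List.finRange d) (x.symm a)
  rw [Equiv.apply_symm_apply] at this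
  rw [this, List.idxOf_finRange]

lemma mem_permList {d : ℕ} (x : Equiv.Perm (Fin d)) (a : Fin d) : a ∈ permList x := by
  exact List.mem_map.2 ⟨x.symm a, List.mem_finRange _, x.apply_symm_apply a⟩

lemma nodup_permList {d : ℕ} (x : Equiv.Perm (Fin d)) : (permList x).Nodup :=
  (List.nodup_finRange d).map x.injective

lemma pair_sublist_iff {α : Type*} [DecidableEq α] {L : List α} (hL : L.Nodup)
    {a b : α} (ha : a ∈ L) (hb : b ∈ L) (hab : a ≠ b) :
    List.Sublist [a, b] L ↔ L.idxOf a < L.idxOf b := by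
  induction L with
  | nil => cases ha
  | cons c t ih =>
    rcases List.nodup_cons.1 hL with ⟨hc, ht⟩
    by_cases hac : a = c
    · subst hac
      have hbt : b ∈ t := by
        rcases List.mem_cons.1 hb with h | h
        · exact absurd h.symm hab
        · exact h
      simp only [List.idxOf_cons_self]
      rw [List.idxOf_cons_ne _ hab]
      constructor
      · intro _; exact Nat.succ_pos _
      · intro _
        exact (List.cons_sublist_cons).2 (List.singleton_sublist.2 hbt)
    · have hat : a ∈ t := by
        rcases List.mem_cons.1 ha with h | h
        · exact absurd h hac
        · exact h
      by_cases hbc : b = c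
      · subst hbc
        rw [List.idxOf_cons_self, List.idxOf_cons_ne _ (fun h => hab h.symm)]
        constructor
        · intro hsub
          rcases List.cons_sublist_cons'.1 hsub with h | ⟨he, _⟩
          · exact absurd (h.subset (by simp)) hc
          · exact absurd he hab
        · intro h; omega
      · have hbt : b ∈ t := by
          rcases List.mem_cons.1 hb with h | h
          · exact absurd h hbc
          · exact h
        rw [List.idxOf_cons_ne _ (fun h => hac h.symm),
            List.idxOf_cons_ne _ (fun h => hbc h.symm)]
        constructor
        · intro hsub
          rcases List.cons_sublist_cons'.1 hsub with h | ⟨he, _⟩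
          · exact Nat.succ_lt_succ ((ih ht hat hbt).1 h)
          · exact absurd he hac
        · intro h
          exact ((ih ht hat hbt).2 (Nat.lt_of_succ_lt_succ h)).cons c

lemma order_mono {d : ℕ} {x y : Equiv.Perm (Fin d)} {I : Finset (Fin d)}
    (h : IsUnalignedSet x y I) {a b : Fin d} (hab : a ≠ b)
    (haI : a ∉ I) (hbI : b ∉ I) (hx : appearsBefore x a b) : appearsBefore y a b := by
  have hx' : List.Sublist [a, b] (permList x) := by
    rw [pair_sublist_iff (nodup_permList x) (mem_permList x a) (mem_permList x b) hab,
      permList_idxOf, permList_idxOf]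
    exact_mod_cast hx
  have hfilt : List.Sublist ([a, b].filter (fun c => decide (c ∉ I)))
      ((permList x).filter (fun c => decide (c ∉ I))) := hx'.filter _
  have heq : [a, b].filter (fun c => decide (c ∉ I)) = [a, b] := by
    simp [List.filter, haI, hbI]
  rw [heq] at hfilt
  have hy : List.Sublist [a, b] (permList y) := hfilt.trans h
  rw [pair_sublist_iff (nodup_permList y) (mem_permList y a) (mem_permList y b) hab,
    permList_idxOf, permList_idxOf] at hy
  exact_mod_cast hy

lemma order_iff {d : ℕ} {x y : Equiv.Perm (Fin d)} {I : Finset (Fin d)}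
    (h : IsUnalignedSet x y I) {a b : Fin d} (hab : a ≠ b)
    (haI : a ∉ I) (hbI : b ∉ I) : appearsBefore x a b ↔ appearsBefore y a b := by
  constructor
  · exact order_mono h hab haI hbI
  · intro hy
    by_contra hx
    have hsymm : x.symm a ≠ x.symm b := fun he => hab (x.symm.injective he)
    have hx' : appearsBefore x b a :=
      lt_of_le_of_ne (not_lt.1 hx) hsymm.symm
    exact lt_asymm hy (order_mono h hab.symm hbI haI hx')

/-- Majority-vote fact justifying the tournament edges in MedianReconstruct (Claim 3.3):
if each of the distinct symbols `a`, `b` is unaligned in at most one of the five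
permutations, then `a` appears before `b` in at least three of the five permutations
iff `a` appears before `b` in `y*`. -/
theorem majority_order_of_rarely_unaligned {d : ℕ} (ystar : Equiv.Perm (Fin d))
    (x : Fin 5 → Equiv.Perm (Fin d)) (I : Fin 5 → Finset (Fin d))
    (hI : ∀ i, IsUnalignedSet (x i) ystar (I i))
    (a b : Fin d) (hab : a ≠ b)
    (ha : (Finset.univ.filter (fun i => a ∈ I i)).card ≤ 1)
    (hb : (Finset.univ.filter (fun i => b ∈ I i)).card ≤ 1) :
    3 ≤ (Finset.univ.filter (fun i => appearsBefore (x i) a b)).card ↔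
      appearsBefore ystar a b := by
  set S : Finset (Fin 5) := Finset.univ.filter (fun i => a ∉ I i ∧ b ∉ I i) with hS
  have hScompl : Sᶜ ⊆ (Finset.univ.filter (fun i => a ∈ I i)) ∪
      (Finset.univ.filter (fun i => b ∈ I i)) := by
    intro i hi
    simp only [hS, Finset.mem_compl, Finset.mem_filter, Finset.mem_union, Finset.mem_univ,
      true_and] at hi ⊢
    tauto
  have hcompl_card : Sᶜ.card ≤ 2 := by
    calc Sᶜ.card ≤ _ := Finset.card_le_card hScompl
    _ ≤ _ + _ := Finset.card_union_le _ _
    _ ≤ 2 := by omega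
  have hScard : 3 ≤ S.card := by
    have := Finset.card_compl_add_card S
    simp only [Fintype.card_fin] at this
    omega
  have hkey : ∀ i ∈ S, (appearsBefore (x i) a b ↔ appearsBefore ystar a b) := by
    intro i hi
    simp only [hS, Finset.mem_filter] at hi
    exact order_iff (hI i) hab hi.2.1 hi.2.2
  constructor
  · intro h3
    by_contra hy
    have hsub : (Finset.univ.filter (fun i => appearsBefore (x i) a b)) ⊆ Sᶜ := by
      intro i hi
      simp only [Finset.mem_filter, Finset.mem_univ, true_and] at hi
      rw [Finset.mem_compl]
      intro hiS
      exact hy ((hkey i hiS).1 hi)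
    have := Finset.card_le_card hsub
    omega
  · intro hy
    have hsub : S ⊆ Finset.univ.filter (fun i => appearsBefore (x i) a b) := by
      intro i hi
      simp only [Finset.mem_filter, Finset.mem_univ, true_and]
      exact (hkey i hi).2 hy
    have := Finset.card_le_card hsub
    omega
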